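/- arXiv:2307.12501 — 11 statements merged into one kernel-verified Lean document; each statement's English description precedes it below -/
import Mathlib

section
/- Let p, k, q be positive integers with p − 2 ≥ k. The adjacency matrix of the generalized pineapple graph K_{p,k}^q has rank p + 1. -/
/-!
The independent vertices all have the same neighbourhood, so their rows and columns repeat and
the rank is that of `K_{p,k}^1`. The adjacency matrix of `K_{p,k}^1` is
`a aᵀ + c eᵀ + e cᵀ + e eᵀ - 1`, where `a` and `c` are the indicator vectors of the clique and of
its first `k` vertices and `e` is the unit vector of the independent vertex `p`. If it kills `x`,
then `x = (a ⬝ᵥ x) a + x_p c + (c ⬝ᵥ x) e + x_p e`; reading off the coordinate `p` and dotting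
with `c` and `a` gives `c ⬝ᵥ x = 0`, `k (a ⬝ᵥ x + x_p) = 0` and `(p - k - 1) (a ⬝ᵥ x) = 0`,
so `x = 0`.
-/

/-- Adjacency matrix of the generalized pineapple graph `K_{p,k}^q`:
vertices `0,…,p-1` form a clique `K_p`, vertices `p,…,p+q-1` are independent,
and each independent vertex is joined to the `k` clique vertices `0,…,k-1`. -/
def pineappleAdj (p k q : ℕ) : Matrix (Fin (p + q)) (Fin (p + q)) ℚ :=
  fun i j =>
    if i = j then 0
    else if (i : ℕ) < p ∧ (j : ℕ) < p then 1
    else if (i : ℕ) < k ∨ (j : ℕ) < k then 1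
    else 0

open Matrix

theorem Matrix.rank_submatrix_of_surjective {m n m₀ n₀ R : Type*} [Fintype n] [Fintype n₀]
    [CommSemiring R] [StrongRankCondition R] (A : Matrix m n R) {r : m₀ → m} {c : n₀ → n}
    (hr : Function.Surjective r) (hc : Function.Surjective c) :
    (A.submatrix r c).rank = A.rank := by
  refine le_antisymm (rank_submatrix_le A r c) ?_
  calc A.rank
      = ((A.submatrix r c).submatrix (Function.surjInv hr) (Function.surjInv hc)).rank := by
        rw [submatrix_submatrix, (Function.rightInverse_surjInv hr).comp_eq_id,
          (Function.rightInverse_surjInv hc).comp_eq_id, submatrix_id_id]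
    _ ≤ _ := rank_submatrix_le _ _ _

section prefixIndicator

variable (R : Type*) [Semiring R]

def prefixIndicator (n m : ℕ) : Fin n → R :=
  fun i => if (i : ℕ) < m then 1 else 0

variable {R}

theorem sum_prefixIndicator {n m : ℕ} (h : m ≤ n) : ∑ i, prefixIndicator R n m i = m := by
  simp [prefixIndicator, Fin.card_filter_val_lt, h]

theorem prefixIndicator_dotProduct_prefixIndicator {n m m' : ℕ} (h : m ≤ m') (h' : m ≤ n) :
    prefixIndicator R n m ⬝ᵥ prefixIndicator R n m' = m := by
  rw [← sum_prefixIndicator h']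
  refine Finset.sum_congr rfl fun i _ => ?_
  simp only [prefixIndicator]
  split_ifs <;> first | omega | simp

theorem prefixIndicator_last {m p : ℕ} (h : m ≤ p) :
    prefixIndicator R (p + 1) m (Fin.last p) = 0 := by
  simp [prefixIndicator, h]

end prefixIndicator

theorem pineappleAdj_one_eq (p k : ℕ) (hkp : k ≤ p) :
    pineappleAdj p k 1 =
      vecMulVec (prefixIndicator ℚ (p + 1) p) (prefixIndicator ℚ (p + 1) p)
      + vecMulVec (prefixIndicator ℚ (p + 1) k) (Pi.single (Fin.last p) 1)
      + vecMulVec (Pi.single (Fin.last p) 1) (prefixIndicator ℚ (p + 1) k)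
      + vecMulVec (Pi.single (Fin.last p) 1) (Pi.single (Fin.last p) 1) - 1 := by
  ext i j
  have := i.isLt; have := j.isLt
  simp only [pineappleAdj, Matrix.sub_apply, Matrix.add_apply, vecMulVec_apply, one_apply,
    prefixIndicator, Pi.single_apply, Fin.ext_iff, Fin.val_last]
  split_ifs <;> first | omega | norm_num

theorem isUnit_pineappleAdj_one (p k : ℕ) (hk : 0 < k) (hkp : k + 2 ≤ p) :
    IsUnit (pineappleAdj p k 1) := by
  set a := prefixIndicator ℚ (p + 1) p
  set c := prefixIndicator ℚ (p + 1) k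
  set e : Fin (p + 1) → ℚ := Pi.single (Fin.last p) 1
  rw [← mulVec_injective_iff_isUnit, ← coe_mulVecLin, injective_iff_map_eq_zero]
  intro x hx
  have hx : x = (a ⬝ᵥ x) • a + x (Fin.last p) • c + (c ⬝ᵥ x) • e + x (Fin.last p) • e := by
    rw [Matrix.mulVecLin_apply, pineappleAdj_one_eq p k (by omega)] at hx
    simp only [sub_mulVec, add_mulVec, vecMulVec_mulVec, one_mulVec, sub_eq_zero] at hx
    simpa using hx.symm
  have hae : a ⬝ᵥ e = 0 := by simp [a, e, prefixIndicator_last]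
  have hce : c ⬝ᵥ e = 0 := by simp [c, e, prefixIndicator_last (by omega : k ≤ p)]
  have haa : a ⬝ᵥ a = p := prefixIndicator_dotProduct_prefixIndicator le_rfl (by omega)
  have hca : c ⬝ᵥ a = k := prefixIndicator_dotProduct_prefixIndicator (by omega) (by omega)
  have hcc : c ⬝ᵥ c = k := prefixIndicator_dotProduct_prefixIndicator le_rfl (by omega)
  have he := congrFun hx (Fin.last p)
  have hc := congrArg (c ⬝ᵥ ·) hx
  have ha := congrArg (a ⬝ᵥ ·) hx
  simp only [Pi.add_apply, Pi.smul_apply, prefixIndicator_last (le_refl p),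
    prefixIndicator_last (by omega : k ≤ p), Pi.single_eq_same, smul_eq_mul, mul_zero, mul_one,
    add_zero, zero_add, right_eq_add, a, c, e] at he
  simp only [dotProduct_add, dotProduct_smul, hae, hce, haa, hca, hcc, dotProduct_comm a c,
    smul_eq_mul, mul_zero, add_zero] at hc ha
  have hsum : a ⬝ᵥ x + x (Fin.last p) = 0 := by
    have : (k : ℚ) * (a ⬝ᵥ x + x (Fin.last p)) = 0 := by linear_combination he - hc
    simpa [hk.ne'] using this
  have hax : a ⬝ᵥ x = 0 := by
    have : ((p : ℚ) - k - 1) * (a ⬝ᵥ x) = 0 := by linear_combination -ha - k * hsum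
    have hpk : (p : ℚ) - k - 1 ≠ 0 := by
      have : (k : ℚ) + 2 ≤ p := by exact_mod_cast hkp
      linarith
    simpa [hpk] using this
  rw [hx, he, hax, show x (Fin.last p) = 0 by linarith]
  simp

theorem Fin.clamp_val_surjective {n m : ℕ} (h : m < n) :
    Function.Surjective fun i : Fin n => Fin.clamp i m :=
  fun j => ⟨⟨j, by omega⟩, Fin.ext (by simp only [Fin.coe_clamp]; omega)⟩

theorem pineappleAdj_eq_submatrix (p k q : ℕ) (hkp : k ≤ p) :
    pineappleAdj p k q =
      (pineappleAdj p k 1).submatrix (fun i : Fin (p + q) => Fin.clamp i p)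
        (fun i : Fin (p + q) => Fin.clamp i p) := by
  ext i j
  simp only [pineappleAdj, submatrix_apply, Fin.ext_iff, Fin.coe_clamp]
  grind

theorem rank_pineappleAdj_general (p k q : ℕ) (hk : 0 < k) (hq : 0 < q)
    (hpk : k ≤ p - 2) :
    (pineappleAdj p k q).rank = p + 1 := by
  have hclamp := Fin.clamp_val_surjective (show p < p + q by omega)
  rw [pineappleAdj_eq_submatrix p k q (by omega), rank_submatrix_of_surjective _ hclamp hclamp,
    rank_of_isUnit _ (isUnit_pineappleAdj_one p k hk (by omega)), Fintype.card_fin]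

/-- The adjacency matrix of `K_{p,k}^q` has rank `p + 1`. -/
theorem rank_pineappleAdj (p k q : ℕ) (hk : 0 < k) (hq : 0 < q)
    (hpk : k ≤ p - 2) (hp : 0 < p) :
    (pineappleAdj p k q).rank = p + 1 :=
  rank_pineappleAdj_general p k q hk hq hpk
end

section
/- Let p, k, q be positive integers with p − 2 ≥ k. If A is the adjacency matrix of the generalized pineapple graph K_{p,k}^q, then the matrix I + A has rank q + 2. -/
/-!
Column `j` of `1 + A` is the all-ones vector for `j < k`, the indicator of the clique
`{0, …, p-1}` for `k ≤ j < p`, and the indicator of `{0, …, k-1} ∪ {j}` for `p ≤ j`. So the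
column space is spanned by `q + 2` vectors, and these are linearly independent: evaluating a
vanishing combination at `k`, at each `p + t` and at `0` forces all coefficients to vanish.
-/

theorem Matrix.rank_eq_card_of_range_col_eq {R m n ι : Type*} [Field R] [Fintype n]
    [Fintype ι] (A : Matrix m n R) {v : ι → m → R} (hv : LinearIndependent R v)
    (hA : Set.range A.col = Set.range v) : A.rank = Fintype.card ι := by
  rw [rank_eq_finrank_span_cols, hA, finrank_span_eq_card hv]

section Pineapple

variable {p k q : ℕ}

theorem one_add_pineappleAdj_apply (i j : Fin (p + q)) :
    (1 + pineappleAdj p k q) i j =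
      if (i : ℕ) = j ∨ ((i : ℕ) < p ∧ (j : ℕ) < p) ∨ (i : ℕ) < k ∨ (j : ℕ) < k then 1
      else 0 := by
  simp only [Matrix.add_apply, Matrix.one_apply, pineappleAdj]
  split_ifs <;> simp_all [Fin.ext_iff]; omega

def pineappleCol (p k q : ℕ) : Fin q ⊕ Fin 2 → Fin (p + q) → ℚ
  | .inl t => fun i => if (i : ℕ) < k ∨ (i : ℕ) = p + t then 1 else 0
  | .inr 0 => fun _ => 1
  | .inr 1 => fun i => if (i : ℕ) < p then 1 else 0

theorem range_col_one_add_pineappleAdj (hk : 0 < k) (hkp : k < p) :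
    Set.range (1 + pineappleAdj p k q).col = Set.range (pineappleCol p k q) := by
  have col_eq : ∀ (j : Fin (p + q)) (s : Fin q ⊕ Fin 2),
      (∀ i : Fin (p + q), (1 + pineappleAdj p k q) i j = pineappleCol p k q s i) →
      (1 + pineappleAdj p k q).col j = pineappleCol p k q s := fun j s h => funext h
  apply subset_antisymm
  · rintro _ ⟨j, rfl⟩
    by_cases hjk : (j : ℕ) < k
    · refine ⟨.inr 0, (col_eq j _ fun i => ?_).symm⟩
      simp only [one_add_pineappleAdj_apply, pineappleCol]
      exact if_pos (by omega)
    by_cases hjp : (j : ℕ) < p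
    · refine ⟨.inr 1, (col_eq j _ fun i => ?_).symm⟩
      simp only [one_add_pineappleAdj_apply, pineappleCol]
      exact if_congr (by omega) rfl rfl
    · refine ⟨.inl ⟨j - p, by omega⟩, (col_eq j _ fun i => ?_).symm⟩
      simp only [one_add_pineappleAdj_apply, pineappleCol]
      exact if_congr (by omega) rfl rfl
  · rintro _ ⟨t | s, rfl⟩
    · refine ⟨⟨p + t, by omega⟩, col_eq _ _ fun i => ?_⟩
      simp only [one_add_pineappleAdj_apply, pineappleCol]
      exact if_congr (by omega) rfl rfl
    match s with
    | 0 =>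
      refine ⟨⟨0, by omega⟩, col_eq _ _ fun i => ?_⟩
      simp only [one_add_pineappleAdj_apply, pineappleCol]
      exact if_pos (by omega)
    | 1 =>
      refine ⟨⟨k, by omega⟩, col_eq _ _ fun i => ?_⟩
      simp only [one_add_pineappleAdj_apply, pineappleCol]
      exact if_congr (by omega) rfl rfl

theorem linearIndependent_pineappleCol (hk : 0 < k) (hkp : k < p) (hq : 0 < q) :
    LinearIndependent ℚ (pineappleCol p k q) := by
  rw [Fintype.linearIndependent_iff]
  intro c hc
  set a := c (.inr 0)
  set b := c (.inr 1)
  have eval : ∀ i : Fin (p + q), ∑ t, c (.inl t) * pineappleCol p k q (.inl t) i + a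
      + b * pineappleCol p k q (.inr 1) i = 0 := fun i => by
    simpa [Fintype.sum_sum_type, Fin.sum_univ_two, pineappleCol, add_assoc] using congrFun hc i
  have at_k : a + b = 0 := by
    simpa [pineappleCol, hkp, show ∀ t : Fin q, k ≠ p + t by omega] using eval ⟨k, by omega⟩
  have at_zero : ∑ t, c (.inl t) + a + b = 0 := by
    simpa [pineappleCol, hk, hkp.trans' hk] using eval ⟨0, by omega⟩
  have at_tail (t : Fin q) : c (.inl t) + a = 0 := by
    simpa [pineappleCol, Fin.val_inj, show ¬ p + t < k by omega] using eval ⟨p + t, by omega⟩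
  have ha : a = 0 := by
    have hsum : ∑ t, c (.inl t) = -(q * a) := by
      simp [eq_neg_of_add_eq_zero_left (at_tail _)]
    have : (q : ℚ) * a = 0 := by linarith
    simpa [hq.ne'] using this
  rintro (t | s)
  · linarith [at_tail t]
  · match s with
    | 0 => exact ha
    | 1 => linarith

end Pineapple

theorem rank_one_add_pineappleAdj_general (p k q : ℕ) (hk : 0 < k) (hq : 0 < q)
    (hpk : k ≤ p - 2) :
    (1 + pineappleAdj p k q).rank = q + 2 := by
  have hkp : k < p := by omega
  rw [Matrix.rank_eq_card_of_range_col_eq _ (linearIndependent_pineappleCol hk hkp hq)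
    (range_col_one_add_pineappleAdj hk hkp), Fintype.card_sum, Fintype.card_fin,
    Fintype.card_fin]

/-- If `A` is the adjacency matrix of `K_{p,k}^q`, then `I + A` has rank `q + 2`. -/
theorem rank_one_add_pineappleAdj (p k q : ℕ) (hk : 0 < k) (hq : 0 < q)
    (hpk : k ≤ p - 2) (hp : 0 < p) :
    (1 + pineappleAdj p k q).rank = q + 2 :=
  rank_one_add_pineappleAdj_general p k q hk hq hpk
end

section
/- Let p, k, q be positive integers with p − 2 ≥ k. The characteristic polynomial of the adjacency matrix of the generalized pineapple graph K_{p,k}^q equals x^{q−1} (x+1)^{p−2} [x³ − (p−2)x² − (p + kq − 1)x + kq(p − k − 1)]. -/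
/-! With `c`, `h`, `l` the indicator vectors of the clique, of the `k` clique vertices joined to
the independent set, and of the independent set, the adjacency matrix is
`c cᵀ + h lᵀ + l hᵀ - diag c`. Hence `x I - A = D - U V` with `D = diag (x + c)` and `U`, `V` of
rank three, and the matrix determinant lemma gives
`det (x I - A) = (x + 1) ^ p * x ^ q * det (1 - V D⁻¹ U)`, where `V D⁻¹ U` is the `3 × 3` matrix
of the weighted inner products of `c`, `h`, `l`, with entries `p/(x+1)`, `k/(x+1)`, `q/x` or `0`.
Both sides of the theorem being polynomials, it suffices to check it for `x ∉ {0, -1}`. -/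

open Polynomial

open Matrix

theorem Fin.sum_ite_val_lt {K : Type*} [AddCommMonoid K] {n m : ℕ} (h : m ≤ n) (c : K) :
    ∑ i : Fin n, (if (i : ℕ) < m then c else 0) = m • c := by
  rw [Finset.sum_ite, Finset.sum_const_zero, add_zero, Finset.sum_const, Fin.card_filter_val_lt,
    min_eq_right h]

namespace Matrix

variable {m n K : Type*} [Fintype m] [DecidableEq m] [Fintype n] [DecidableEq n] [Field K]

theorem det_diagonal_sub_mul (d : m → K) (hd : ∀ i, d i ≠ 0) (U : Matrix m n K)
    (V : Matrix n m K) :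
    (diagonal d - U * V).det = (∏ i, d i) * (1 - V * diagonal d⁻¹ * U).det := by
  have hfactor : diagonal d - U * V = diagonal d * (1 - diagonal d⁻¹ * U * V) := by
    rw [Matrix.mul_sub, Matrix.mul_one, ← Matrix.mul_assoc, ← Matrix.mul_assoc,
      diagonal_mul_diagonal]
    simp [mul_inv_cancel₀ (hd _)]
  rw [hfactor, det_mul, det_diagonal, det_one_sub_mul_comm, Matrix.mul_assoc]

end Matrix

namespace Pineapple

variable (p k q : ℕ)

def cliqueVec : Fin (p + q) → ℚ := fun i => if (i : ℕ) < p then 1 else 0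

def hubVec : Fin (p + q) → ℚ := fun i => if (i : ℕ) < k then 1 else 0

def leafVec : Fin (p + q) → ℚ := fun i => if (i : ℕ) < p then 0 else 1

def incidenceLeft : Matrix (Fin (p + q)) (Fin 3) ℚ :=
  of fun i => ![cliqueVec p q i, hubVec p k q i, leafVec p q i]

def incidenceRight : Matrix (Fin 3) (Fin (p + q)) ℚ :=
  of ![cliqueVec p q, leafVec p q, hubVec p k q]

def reducedMatrix (x : ℚ) : Matrix (Fin 3) (Fin 3) ℚ :=
  !![p * (x + 1)⁻¹, k * (x + 1)⁻¹, 0; 0, 0, q * x⁻¹; k * (x + 1)⁻¹, k * (x + 1)⁻¹, 0]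

variable {p k q}

theorem pineappleAdj_eq (hkp : k ≤ p) :
    pineappleAdj p k q =
      incidenceLeft p k q * incidenceRight p k q - diagonal (cliqueVec p q) := by
  ext i j
  simp only [pineappleAdj, Matrix.sub_apply, Matrix.mul_apply, Fin.sum_univ_three, diagonal_apply,
    incidenceLeft, incidenceRight, cliqueVec, hubVec, leafVec, of_apply, cons_val_zero,
    cons_val_one, cons_val_two, head_cons, tail_cons, Fin.ext_iff]
  split_ifs <;> norm_num <;> omega

theorem incidenceRight_mul_diagonal_mul_incidenceLeft (hkp : k ≤ p) (x : ℚ) :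
    incidenceRight p k q * diagonal (fun i => (x + cliqueVec p q i)⁻¹) * incidenceLeft p k q =
      reducedMatrix p k q x := by
  ext a b
  have hleaf (i : ℕ) : ¬ p + i < k := by omega
  rw [Matrix.mul_apply]
  simp only [mul_diagonal]
  fin_cases a <;> fin_cases b <;>
    simp [reducedMatrix, Fin.sum_univ_add, incidenceLeft, incidenceRight, cliqueVec, hubVec,
      leafVec, hleaf, ← ite_and, Fin.sum_ite_val_lt hkp]

theorem det_scalar_sub_pineappleAdj (hkp : k ≤ p) {x : ℚ} (hx : x ≠ 0) (hx1 : x + 1 ≠ 0) :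
    (scalar _ x - pineappleAdj p k q).det =
      (x + 1) ^ p * x ^ q * (1 - reducedMatrix p k q x).det := by
  have hdiag : scalar _ x - pineappleAdj p k q =
      diagonal (fun i => x + cliqueVec p q i) - incidenceLeft p k q * incidenceRight p k q := by
    rw [pineappleAdj_eq hkp, scalar_apply, sub_sub_eq_add_sub, diagonal_add]
  have hd (i : Fin (p + q)) : x + cliqueVec p q i ≠ 0 := by
    unfold cliqueVec
    split_ifs <;> simpa
  rw [hdiag, det_diagonal_sub_mul _ hd, Pi.inv_def,
    incidenceRight_mul_diagonal_mul_incidenceLeft hkp, Fin.prod_univ_add]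
  simp [cliqueVec]

theorem mul_det_one_sub_reducedMatrix {x : ℚ} (hx : x ≠ 0) (hx1 : x + 1 ≠ 0) :
    (x + 1) ^ 2 * x * (1 - reducedMatrix p k q x).det =
      x ^ 3 - (p - 2) * x ^ 2 - (p + k * q - 1) * x + k * q * (p - k - 1) := by
  rw [det_fin_three]
  simp only [reducedMatrix, Matrix.sub_apply, one_apply, of_apply, cons_val', cons_val_zero,
    cons_val_one, cons_val_fin_one, cons_val, Fin.reduceEq, ↓reduceIte]
  field_simp
  ring

end Pineapple

theorem charpoly_pineapple_general (p k q : ℕ) (hk : 0 < k) (hq : 0 < q)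
    (hpk : k ≤ p - 2) :
    (pineappleAdj p k q).charpoly =
      X ^ (q - 1) * (X + 1) ^ (p - 2) *
        (X ^ 3 - C ((p : ℚ) - 2) * X ^ 2 - C ((p : ℚ) + k * q - 1) * X
          + C ((k : ℚ) * q * ((p : ℚ) - k - 1))) := by
  have hp : 2 ≤ p := by omega
  refine eq_of_infinite_eval_eq _ _
    ((Set.infinite_univ.sdiff (Set.toFinite {0, -1})).mono ?_)
  rintro x ⟨-, hx⟩
  simp only [Set.mem_insert_iff, Set.mem_singleton_iff, not_or, ← add_eq_zero_iff_eq_neg] at hx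
  obtain ⟨hx0, hx1⟩ := hx
  simp only [Set.mem_ofPred_eq, eval_charpoly,
    Pineapple.det_scalar_sub_pineappleAdj (by omega : k ≤ p) hx0 hx1,
    eval_mul, eval_pow, eval_X, eval_add, eval_sub, eval_C, eval_one]
  rw [← Pineapple.mul_det_one_sub_reducedMatrix hx0 hx1, ← pow_sub_mul_pow (x + 1) hp,
    ← pow_sub_mul_pow x hq]
  ring

/-- The characteristic polynomial of `K_{p,k}^q` equals
`x^{q−1} (x+1)^{p−2} [x³ − (p−2)x² − (p + kq − 1)x + kq(p − k − 1)]`. -/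
theorem charpoly_pineapple (p k q : ℕ) (hk : 0 < k) (hq : 0 < q)
    (hpk : k ≤ p - 2) (hp : 0 < p) :
    (pineappleAdj p k q).charpoly =
      X ^ (q - 1) * (X + 1) ^ (p - 2) *
        (X ^ 3 - C ((p : ℚ) - 2) * X ^ 2 - C ((p : ℚ) + k * q - 1) * X
          + C ((k : ℚ) * q * ((p : ℚ) - k - 1))) :=
  charpoly_pineapple_general p k q hk hq hpk
end

section
/- Let p, k, q be positive integers with p − 2 ≥ k. The cubic g(x) = x³ − (p−2)x² − (p + kq − 1)x + kq(p − k − 1) has three real roots, exactly two of which are positive and one of which is less than −1. -/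
set_option maxHeartbeats 1000000 in
/-- For positive integers `p, k, q` with `p ≥ k + 2`, the real cubic
`g(x) = x³ − (p−2)x² − (p+kq−1)x + kq(p−k−1)` has three real roots,
two of which are positive and one of which is less than `−1`. -/
theorem cubic_roots_location (p k q : ℕ) (hk : 0 < k) (hq : 0 < q)
    (hp : 0 < p) (hpk : k + 2 ≤ p) :
    ∃ x y z : ℝ, x < -1 ∧ 0 < y ∧ 0 < z ∧
      ∀ t : ℝ,
        t ^ 3 - ((p : ℝ) - 2) * t ^ 2 - ((p : ℝ) + k * q - 1) * t
            + (k : ℝ) * q * ((p : ℝ) - k - 1)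
          = (t - x) * (t - y) * (t - z) := by
  set P : ℝ := (p : ℝ) with hP
  set K : ℝ := (k : ℝ) with hK
  set Q : ℝ := (q : ℝ) with hQ
  have hK1 : (1 : ℝ) ≤ K := by rw [hK]; exact_mod_cast hk
  have hQ1 : (1 : ℝ) ≤ Q := by rw [hQ]; exact_mod_cast hq
  have hPK : K + 2 ≤ P := by rw [hK, hP]; exact_mod_cast hpk
  have hP3 : (3 : ℝ) ≤ P := by linarith
  have hKpos : (0:ℝ) < K := by linarith
  have hQpos : (0:ℝ) < Q := by linarith
  have hPpos : (0:ℝ) < P := by linarith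
  have hKQpos : (0:ℝ) < K * Q := mul_pos hKpos hQpos
  have hKQ1 : (1:ℝ) ≤ K * Q := by nlinarith
  have hKQPpos : (0:ℝ) < K * Q * P := mul_pos hKQpos hPpos
  set G : ℝ → ℝ := fun t => t ^ 3 - (P - 2) * t ^ 2 - (P + K * Q - 1) * t
      + K * Q * (P - K - 1) with hG
  have hcont : Continuous G := by
    simp only [hG]; continuity
  -- big bound
  obtain ⟨M, hM⟩ : ∃ M : ℝ, M = P + K * Q + K * Q * P + 3 := ⟨_, rfl⟩
  have hM3 : (3 : ℝ) ≤ M := by rw [hM]; linarith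
  have hMpos : (0:ℝ) < M := by linarith
  have h1 : K * Q * (P - K - 1) ≤ K * Q * P := by nlinarith
  have h2 : K * Q * P ≤ M := by rw [hM]; linarith
  have h3 : P + K * Q - 1 ≤ M := by rw [hM]; linarith
  have hGnegM : G (-M) < 0 := by
    simp only [hG]
    nlinarith [mul_le_mul_of_nonneg_right h3 hMpos.le,
      mul_le_mul_of_nonneg_right hM3 (mul_pos hMpos hMpos).le,
      mul_pos hMpos hMpos, sq_nonneg M]
  have hGneg1 : 0 < G (-1) := by
    have hGe : G (-1) = K * Q * (P - K) := by simp only [hG]; ring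
    rw [hGe]
    have : (0:ℝ) < P - K := by linarith
    exact mul_pos hKQpos this
  -- root x in (-M, -1)
  have hIVT := intermediate_value_Ioo (by linarith : -M ≤ (-1:ℝ)) hcont.continuousOn
  obtain ⟨x, hxmem, hx⟩ := hIVT ⟨hGnegM, hGneg1⟩
  have hxlt : x < -1 := hxmem.2
  have hxneg : x < 0 := by linarith
  have hxroot : x ^ 3 - (P - 2) * x ^ 2 - (P + K * Q - 1) * x + K * Q * (P - K - 1) = 0 := hx
  clear hx hxmem hIVT hGnegM hGneg1 hcont hG h1 h2 h3 hM3 hMpos hM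
  clear G M
  -- quadratic factor coefficients
  obtain ⟨b, hb⟩ : ∃ b : ℝ, b = x - (P - 2) := ⟨_, rfl⟩
  obtain ⟨c, hc⟩ : ∃ c : ℝ, c = x ^ 2 - (P - 2) * x - (P + K * Q - 1) := ⟨_, rfl⟩
  have hfact : ∀ t : ℝ, t ^ 3 - (P - 2) * t ^ 2 - (P + K * Q - 1) * t
      + K * Q * (P - K - 1) = (t - x) * (t ^ 2 + b * t + c) := by
    intro t; rw [hb, hc]; linear_combination hxroot
  have hcx : c * x = -(K * Q * (P - K - 1)) := by
    linear_combination hfact 0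
  have hKQ : 0 < K * Q * (P - K - 1) := mul_pos hKQpos (by linarith)
  have hcpos : 0 < c := by
    rcases lt_or_ge 0 c with h | h
    · exact h
    · exfalso
      have h0 : 0 ≤ (-c) * (-x) := mul_nonneg (by linarith) (by linarith)
      have h1 : (-c) * (-x) = c * x := by ring
      rw [h1, hcx] at h0
      linarith
  have hbneg : b < 0 := by rw [hb]; linarith
  -- quadratic is negative at P - 1
  have hqval : (P - 1 - x) * ((P - 1) ^ 2 + b * (P - 1) + c) = -(K ^ 2 * Q) := by
    linear_combination -(hfact (P - 1))
  have hPx : 0 < P - 1 - x := by linarith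
  have hK2Q : 0 < K ^ 2 * Q := mul_pos (pow_pos hKpos 2) hQpos
  have hqneg : (P - 1) ^ 2 + b * (P - 1) + c < 0 := by
    rcases lt_or_ge ((P - 1) ^ 2 + b * (P - 1) + c) 0 with h | h
    · exact h
    · exfalso
      have h0 : 0 ≤ (P - 1 - x) * ((P - 1) ^ 2 + b * (P - 1) + c) :=
        mul_nonneg hPx.le h
      rw [hqval] at h0
      linarith
  -- discriminant
  have hD : 0 < b ^ 2 - 4 * c := by linarith [sq_nonneg (2 * (P - 1) + b)]
  obtain ⟨s, hs⟩ : ∃ s : ℝ, s = Real.sqrt (b ^ 2 - 4 * c) := ⟨_, rfl⟩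
  have hs2 : s ^ 2 = b ^ 2 - 4 * c := by rw [hs]; exact Real.sq_sqrt hD.le
  have hsnn : 0 ≤ s := hs ▸ Real.sqrt_nonneg _
  have hslt : s < -b := by
    rw [hs]
    exact (Real.sqrt_lt' (by linarith)).mpr (by nlinarith [hcpos])
  refine ⟨x, (-b - s) / 2, (-b + s) / 2, hxlt, by linarith, by linarith, fun t => ?_⟩
  have hquad : t ^ 2 + b * t + c = (t - (-b - s) / 2) * (t - (-b + s) / 2) := by
    linear_combination hs2 / 4
  rw [hfact t, hquad]; ring
end

section
/- Let c, d, e be integers with c, d, e ≥ 2 and k ≥ 1, a ≥ 0 integers. Then the system k(a + d + e − 1) + c = de and k(a + d + e − 1)(c − k) = (c − 1)de has no solution. Equivalently, there are no integers p, q, a, c, d, e, k with c, d, e ≥ 2, k ≥ 1, a ≥ 0 satisfying q = a + d + e − 1, p = c + 1, p + kq − 1 = de, and kq(p − k − 1) = (c−1)de. -/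
lemma no_sol_aux (c d e k a : ℤ) (hc : 2 ≤ c) (hd : 2 ≤ d) (he : 2 ≤ e)
    (hk : 1 ≤ k) (ha : 0 ≤ a)
    (h1 : k * (a + d + e - 1) + c = d * e)
    (h2 : k * (a + d + e - 1) * (c - k) = (c - 1) * (d * e)) : False := by
  nlinarith [mul_nonneg (mul_nonneg (by linarith : (0:ℤ) ≤ k) (by linarith : (0:ℤ) ≤ a + d + e - 1)) (by linarith : (0:ℤ) ≤ k - 1)]

/-- No graph of the form `K_c ∪ K_{d,e} ∪ aK₁` is cospectral with a generalized
pineapple graph: the corresponding arithmetic system has no solution. -/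
theorem no_solution_complete_union_bipartite :
    (¬ ∃ c d e k a : ℤ, 2 ≤ c ∧ 2 ≤ d ∧ 2 ≤ e ∧ 1 ≤ k ∧ 0 ≤ a ∧
        k * (a + d + e - 1) + c = d * e ∧
        k * (a + d + e - 1) * (c - k) = (c - 1) * (d * e)) ∧
    (¬ ∃ p q a c d e k : ℤ, 2 ≤ c ∧ 2 ≤ d ∧ 2 ≤ e ∧ 1 ≤ k ∧ 0 ≤ a ∧
        q = a + d + e - 1 ∧ p = c + 1 ∧
        p + k * q - 1 = d * e ∧
        k * q * (p - k - 1) = (c - 1) * (d * e)) := by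
  constructor
  · rintro ⟨c, d, e, k, a, hc, hd, he, hk, ha, h1, h2⟩
    exact no_sol_aux c d e k a hc hd he hk ha h1 h2
  · rintro ⟨p, q, a, c, d, e, k, hc, hd, he, hk, ha, hq, hp, h1, h2⟩
    subst hq hp
    exact no_sol_aux c d e k a hc hd he hk ha (by linarith) (by linarith [h2]; )
end

section
/- Let a ≥ 3 be an odd integer and set p = (7a−1)/2, q = (5a−1)/2, k = (a−1)/2, t = a, m = (5a−1)/2, n = (3a−1)/2. Then the system n = q − a, (p + q − a − k − 1)·t = (q − a)(p − k), m + t = p, and m(n − t) = kq holds. Consequently the graph K_t ∪ CS_{m,n} ∪ aK_1 is cospectral with K_{p,k}^q, i.e., x^a · f_{K_t}(x) · f_{CS_{m,n}}(x) = x^{q−1}(x+1)^{p−2}[x³ − (p−2)x² − (p+kq−1)x + kq(p−k−1)], where f_{K_t}(x) = (x+1)^{t−1}(x − (t−1)) and f_{CS_{m,n}}(x) = x^{n−1}(x+1)^{m−1}(x² − (m−1)x − mn). -/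
open Polynomial

/-- For odd `a ≥ 3`, with `p = (7a−1)/2`, `q = (5a−1)/2`, `k = (a−1)/2`,
`t = a`, `m = (5a−1)/2`, `n = (3a−1)/2`, the system
`n = q − a`, `(p+q−a−k−1)t = (q−a)(p−k)`, `m + t = p`, `m(n−t) = kq`
holds, and `K_t ∪ CS_{m,n} ∪ aK₁` is cospectral with `K_{p,k}^q`. -/
theorem pineapple_nonDAS_family (a p q k t m n : ℕ)
    (ha3 : 3 ≤ a) (haodd : Odd a)
    (hp : 2 * p = 7 * a - 1) (hq : 2 * q = 5 * a - 1) (hk : 2 * k = a - 1)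
    (ht : t = a) (hm : 2 * m = 5 * a - 1) (hn : 2 * n = 3 * a - 1) :
    ((n : ℤ) = (q : ℤ) - a ∧
     ((p : ℤ) + q - a - k - 1) * t = ((q : ℤ) - a) * ((p : ℤ) - k) ∧
     m + t = p ∧
     (m : ℤ) * ((n : ℤ) - t) = (k : ℤ) * q) ∧
    X ^ a * ((X + 1) ^ (t - 1) * (X - C ((t : ℚ) - 1))) *
        (X ^ (n - 1) * (X + 1) ^ (m - 1) *
          (X ^ 2 - C ((m : ℚ) - 1) * X - C ((m : ℚ) * n)))
      = X ^ (q - 1) * (X + 1) ^ (p - 2) *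
        (X ^ 3 - C ((p : ℚ) - 2) * X ^ 2 - C ((p : ℚ) + k * q - 1) * X
          + C ((k : ℚ) * q * ((p : ℚ) - k - 1))) := by
  obtain ⟨b, hb⟩ := haodd
  have hb1 : 1 ≤ b := by omega
  have hp' : p = 7 * b + 3 := by omega
  have hq' : q = 5 * b + 2 := by omega
  have hk' : k = b := by omega
  have ht' : t = 2 * b + 1 := by omega
  have hm' : m = 5 * b + 2 := by omega
  have hn' : n = 3 * b + 1 := by omega
  subst hp' hq' hm' hn' ht' hk' hb
  constructor
  · refine ⟨by push_cast; ring, by push_cast; ring, by omega, by push_cast; ring⟩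
  · rw [show 2 * k + 1 - 1 = 2 * k by omega, show 3 * k + 1 - 1 = 3 * k by omega,
      show 5 * k + 2 - 1 = 5 * k + 1 by omega,
      show 7 * k + 3 - 2 = 7 * k + 1 by omega]
    push_cast
    simp only [map_add, map_mul, map_sub, map_one, map_ofNat, Polynomial.C_eq_natCast]
    ring
end

section
/- The polynomial identity x^a (x+1)^{t−1}(x−(t−1)) · x^{n−1}(x+1)^{m−1}(x²−(m−1)x−mn) = x^{q−1}(x+1)^{p−2}[x³−(p−2)x²−(p+kq−1)x+kq(p−k−1)] holds (for parameters in the admissible range with n ≥ 2, t ≥ 2, m ≥ 2) if and only if n = q − a, m + t = p, m(n − t) = kq, and (p + q − a − k − 1)t = (q − a)(p − k). -/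
open Polynomial

private lemma rm_zero_X_pow (e : ℕ) : rootMultiplicity (0:ℚ) (X ^ e) = e := by
  simpa using rootMultiplicity_X_sub_C_pow (0:ℚ) e

private lemma rm_neg_one_X_add_one_pow (e : ℕ) :
    rootMultiplicity (-1:ℚ) ((X + 1) ^ e) = e := by
  have h : (X + 1 : ℚ[X]) = X - C (-1) := by simp
  rw [h]; exact rootMultiplicity_X_sub_C_pow (-1:ℚ) e

private lemma rm_zero_X_add_one_pow (e : ℕ) :
    rootMultiplicity (0:ℚ) ((X + 1) ^ e) = 0 := by
  apply rootMultiplicity_eq_zero; simp [IsRoot]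

private lemma rm_neg_one_X_pow (e : ℕ) : rootMultiplicity (-1:ℚ) (X ^ e) = 0 := by
  apply rootMultiplicity_eq_zero; simp [IsRoot]

/-- The characteristic polynomial of `K_t ∪ CS_{m,n} ∪ aK₁` equals that of the
generalized pineapple graph `K_{p,k}^q` if and only if `n = q − a`, `m + t = p`,
`m(n − t) = kq`, and `(p + q − a − k − 1)t = (q − a)(p − k)`. -/
theorem cospectral_union_iff (p k q a t m n : ℕ)
    (hk : 0 < k) (hq : 0 < q) (hpk : k + 2 ≤ p)
    (ht : 2 ≤ t) (hm : 2 ≤ m) (hn : 2 ≤ n) :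
    (X ^ a * ((X + 1) ^ (t - 1) * (X - C ((t : ℚ) - 1))) *
        (X ^ (n - 1) * (X + 1) ^ (m - 1) *
          (X ^ 2 - C ((m : ℚ) - 1) * X - C ((m : ℚ) * n)))
      = X ^ (q - 1) * (X + 1) ^ (p - 2) *
        (X ^ 3 - C ((p : ℚ) - 2) * X ^ 2 - C ((p : ℚ) + k * q - 1) * X
          + C ((k : ℚ) * q * ((p : ℚ) - k - 1))))
    ↔ ((n : ℤ) = (q : ℤ) - a ∧
       (m : ℤ) + t = p ∧
       (m : ℤ) * ((n : ℤ) - t) = (k : ℤ) * q ∧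
       ((p : ℤ) + q - a - k - 1) * t = ((q : ℤ) - a) * ((p : ℤ) - k)) := by
  have htQ : (2:ℚ) ≤ t := by exact_mod_cast ht
  have hmQ : (2:ℚ) ≤ m := by exact_mod_cast hm
  have hnQ : (2:ℚ) ≤ n := by exact_mod_cast hn
  have hkQ : (1:ℚ) ≤ k := by exact_mod_cast hk
  have hqQ : (1:ℚ) ≤ q := by exact_mod_cast hq
  have hpQ : (k:ℚ) + 2 ≤ p := by exact_mod_cast hpk
  set L : ℚ[X] := (X - C ((t : ℚ) - 1)) *
      (X ^ 2 - C ((m : ℚ) - 1) * X - C ((m : ℚ) * n)) with hLdef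
  set R : ℚ[X] := X ^ 3 - C ((p : ℚ) - 2) * X ^ 2 - C ((p : ℚ) + k * q - 1) * X
      + C ((k : ℚ) * q * ((p : ℚ) - k - 1)) with hRdef
  have hL0 : eval 0 L ≠ 0 := by
    have hv : eval 0 L = ((t:ℚ)-1)*((m:ℚ)*n) := by
      simp only [hLdef, eval_mul, eval_sub, eval_pow, eval_X, eval_C, eval_zero]; ring
    rw [hv]
    exact ne_of_gt (mul_pos (by linarith) (mul_pos (by linarith) (by linarith)))
  have hL1 : eval (-1) L ≠ 0 := by
    have hv : eval (-1) L = (t:ℚ)*m*((n:ℚ)-1) := by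
      simp only [hLdef, eval_mul, eval_sub, eval_pow, eval_X, eval_C]; ring
    rw [hv]
    exact ne_of_gt (mul_pos (mul_pos (by linarith) (by linarith)) (by linarith))
  have hR0 : eval 0 R ≠ 0 := by
    have hv : eval 0 R = (k:ℚ)*q*((p:ℚ)-k-1) := by
      simp only [hRdef, eval_add, eval_mul, eval_sub, eval_pow, eval_X, eval_C, eval_zero]; ring
    rw [hv]
    exact ne_of_gt (mul_pos (mul_pos (by linarith) (by linarith)) (by linarith))
  have hR1 : eval (-1) R ≠ 0 := by
    have hv : eval (-1) R = (k:ℚ)*q*((p:ℚ)-k) := by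
      simp only [hRdef, eval_add, eval_mul, eval_sub, eval_pow, eval_X, eval_C]; ring
    rw [hv]
    exact ne_of_gt (mul_pos (mul_pos (by linarith) (by linarith)) (by linarith))
  have hLne : L ≠ 0 := fun h => hL0 (by rw [h]; simp)
  have hRne : R ≠ 0 := fun h => hR0 (by rw [h]; simp)
  have hXpow : ∀ e : ℕ, (X:ℚ[X]) ^ e ≠ 0 := fun e => pow_ne_zero e X_ne_zero
  have hX1 : (X + 1 : ℚ[X]) ≠ 0 := fun h => by simpa using congrArg (eval 0) h
  have hX1pow : ∀ e : ℕ, ((X:ℚ[X]) + 1) ^ e ≠ 0 := fun e => pow_ne_zero e hX1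
  constructor
  · intro hEq
    have key : X ^ (a + (n-1)) * ((X+1) ^ ((t-1) + (m-1)) * L)
        = X ^ (q-1) * ((X+1) ^ (p-2) * R) := by
      rw [pow_add, pow_add]
      linear_combination hEq
    -- root multiplicity at 0
    have e0 : a + (n-1) = q - 1 := by
      have h := congrArg (rootMultiplicity (0:ℚ)) key
      rw [rootMultiplicity_mul (mul_ne_zero (hXpow _) (mul_ne_zero (hX1pow _) hLne)),
          rootMultiplicity_mul (mul_ne_zero (hX1pow _) hLne),
          rootMultiplicity_mul (mul_ne_zero (hXpow _) (mul_ne_zero (hX1pow _) hRne)),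
          rootMultiplicity_mul (mul_ne_zero (hX1pow _) hRne),
          rm_zero_X_pow, rm_zero_X_pow, rm_zero_X_add_one_pow, rm_zero_X_add_one_pow,
          rootMultiplicity_eq_zero hL0, rootMultiplicity_eq_zero hR0] at h
      omega
    have e1 : (t-1) + (m-1) = p - 2 := by
      have h := congrArg (rootMultiplicity (-1:ℚ)) key
      rw [rootMultiplicity_mul (mul_ne_zero (hXpow _) (mul_ne_zero (hX1pow _) hLne)),
          rootMultiplicity_mul (mul_ne_zero (hX1pow _) hLne),
          rootMultiplicity_mul (mul_ne_zero (hXpow _) (mul_ne_zero (hX1pow _) hRne)),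
          rootMultiplicity_mul (mul_ne_zero (hX1pow _) hRne),
          rm_neg_one_X_pow, rm_neg_one_X_pow, rm_neg_one_X_add_one_pow,
          rm_neg_one_X_add_one_pow,
          rootMultiplicity_eq_zero hL1, rootMultiplicity_eq_zero hR1] at h
      omega
    have hqan : a + n = q := by omega
    have hptm : t + m = p := by omega
    have hLR : L = R := by
      rw [← e0, ← e1] at key
      exact mul_left_cancel₀ (hX1pow _) (mul_left_cancel₀ (hXpow _) key)
    have E0 := congrArg (eval 0) hLR
    have E1 := congrArg (eval (-1)) hLR
    simp only [hLdef, hRdef, eval_add, eval_mul, eval_sub, eval_pow, eval_X, eval_C,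
      eval_zero] at E0 E1
    have c0 : ((t:ℚ)-1) * ((m:ℚ)*n) = (k:ℚ)*q*((p:ℚ)-k-1) := by linear_combination E0
    have c1 : (t:ℚ)*m*((n:ℚ)-1) = (k:ℚ)*q*((p:ℚ)-k) := by linear_combination E1
    have h3Q : (m:ℚ)*((n:ℚ)-t) = (k:ℚ)*q := by linear_combination c1 - c0
    have hqaQ : (q:ℚ) = a + n := by exact_mod_cast hqan.symm
    have hmne : (m:ℚ) ≠ 0 := by positivity
    have h4Q : ((p:ℚ)+q-a-k-1)*t = ((q:ℚ)-a)*((p:ℚ)-k) := by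
      apply mul_left_cancel₀ hmne
      linear_combination c1 - ((p:ℚ)-k)*h3Q + ((m:ℚ)*t - m*((p:ℚ)-k))*hqaQ
    refine ⟨by omega, by omega, by exact_mod_cast h3Q, by exact_mod_cast h4Q⟩
  · rintro ⟨h1, h2, h3, h4⟩
    have hqan : a + n = q := by omega
    have hptm : t + m = p := by omega
    have h3Q : (m:ℚ)*((n:ℚ)-t) = (k:ℚ)*q := by exact_mod_cast h3
    have h4Q : ((p:ℚ)+q-a-k-1)*t = ((q:ℚ)-a)*((p:ℚ)-k) := by exact_mod_cast h4
    have hqaQ : (q:ℚ) = a + n := by exact_mod_cast hqan.symm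
    have hpQ' : (p:ℚ) = t + m := by exact_mod_cast hptm.symm
    have c2 : (p:ℚ) - 2 = ((t:ℚ)-1) + ((m:ℚ)-1) := by linear_combination hpQ'
    have c1 : ((t:ℚ)-1)*((m:ℚ)-1) - (m:ℚ)*n = -((p:ℚ) + k*q - 1) := by
      linear_combination -h3Q + hpQ'
    have c0 : ((t:ℚ)-1)*((m:ℚ)*n) = (k:ℚ)*q*((p:ℚ)-k-1) := by
      linear_combination (m:ℚ)*h4Q - (m:ℚ)*((t:ℚ)-((p:ℚ)-k))*hqaQ + ((p:ℚ)-k-1)*h3Q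
    have hLR : L = R := by
      have C2 := congrArg C c2
      have C1 := congrArg C c1
      have C0 := congrArg C c0
      rw [hLdef, hRdef]
      simp only [map_add, map_sub, map_mul, map_one, map_neg, map_ofNat] at C0 C1 C2 ⊢
      linear_combination X^2*C2 + X*C1 + C0
    have eq : q - 1 = a + (n-1) := by omega
    have ep : p - 2 = (t-1) + (m-1) := by omega
    rw [eq, ep, pow_add, pow_add]
    linear_combination (X^a * X^(n-1) * ((X+1)^(t-1) * (X+1)^(m-1))) * hLR
end

section
/- Let p, k, q be positive integers with p − 2 ≥ k, and let a ≥ 0, m ≥ 1, l ≥ 1, n ≥ 2 be integers satisfying m + a = q, l + n = p, lm + mn − ln = kq, and 2lmn − lm − mn = kq(p − k − 1). Then m = (p + 2kq + √((p+2kq)² + 8kpq(p−k−1)))/(4p), and {l, n} = { (p ± √(p² − p + 2kq − √((p+2kq)² + 8kpq(p−k−1))))/2 }. -/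
/-!
Since `l + n = p`, the relation `lm + mn - ln = kq` gives `ln = mp - kq`, and substituting into
the last equation leaves the quadratic `2p m² - (p + 2kq) m - kq(p - k - 1) = 0` in `m` alone.
Its constant term is nonpositive, so the positive root `m` is the larger one. Then `l` and `n`
are the two roots of `x² - p x + (mp - kq)`, whose discriminant `(l - n)²` equals the inner
radicand once the outer square root is replaced by `4pm - (p + 2kq)`.
-/

section System

variable {R : Type*} [CommRing R] {p k q l m n : R}

theorem mixedExt_mul_eq (h2 : l + n = p) (h3 : l * m + m * n - l * n = k * q) :
    l * n = m * p - k * q := by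
  linear_combination m * h2 - h3

theorem mixedExt_quadratic_eq_zero (h2 : l + n = p) (h3 : l * m + m * n - l * n = k * q)
    (h4 : 2 * l * m * n - l * m - m * n = k * q * (p - k - 1)) :
    2 * p * (m * m) + -(p + 2 * k * q) * m + -(k * q * (p - k - 1)) = 0 := by
  linear_combination h4 - 2 * m * mixedExt_mul_eq h2 h3 + m * h2

end System

theorem sqrt_discrim_eq_of_pos_root {a b c x : ℝ} (ha : 0 ≤ a) (hc : c ≤ 0) (hx : 0 < x)
    (h : a * (x * x) + b * x + c = 0) : √(discrim a b c) = 2 * a * x + b := by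
  have hroot : 0 ≤ 2 * a * x + b := by
    have : x * (2 * a * x + b) = a * x ^ 2 - c := by linear_combination h
    exact nonneg_of_mul_nonneg_right (this ▸ by nlinarith) hx
  rw [discrim_eq_sq_of_quadratic_eq_zero h, Real.sqrt_sq hroot]

theorem Set.pair_eq_half_add_sub_sqrt {l n s d : ℝ} (hs : l + n = s) (hd : (l - n) ^ 2 = d) :
    ({l, n} : Set ℝ) = {(s + √d) / 2, (s - √d) / 2} := by
  rw [← hd, Real.sqrt_sq_eq_abs]
  rcases le_total n l with h | h
  · rw [abs_of_nonneg (sub_nonneg.2 h)]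
    congr 1 <;> [skip; congr 1] <;> linarith
  · rw [abs_of_nonpos (sub_nonpos.2 h), Set.pair_comm]
    congr 1 <;> [skip; congr 1] <;> linarith

theorem mixed_ext_P3_pos_neg_pos_general (p k q l m n : ℤ)
    (hp : 0 < p) (hk : 0 < k) (hq : 0 < q) (hpk : k + 2 ≤ p)
    (hm : 1 ≤ m)
    (h2 : l + n = p)
    (h3 : l * m + m * n - l * n = k * q)
    (h4 : 2 * l * m * n - l * m - m * n = k * q * (p - k - 1)) :
    (m : ℝ) =
      ((p : ℝ) + 2 * k * q +
          Real.sqrt (((p : ℝ) + 2 * k * q) ^ 2 + 8 * k * p * q * ((p : ℝ) - k - 1)))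
        / (4 * p) ∧
    ({(l : ℝ), (n : ℝ)} : Set ℝ) =
      { ((p : ℝ) + Real.sqrt ((p : ℝ) ^ 2 - p + 2 * k * q -
            Real.sqrt (((p : ℝ) + 2 * k * q) ^ 2 + 8 * k * p * q * ((p : ℝ) - k - 1)))) / 2,
        ((p : ℝ) - Real.sqrt ((p : ℝ) ^ 2 - p + 2 * k * q -
            Real.sqrt (((p : ℝ) + 2 * k * q) ^ 2 + 8 * k * p * q * ((p : ℝ) - k - 1)))) / 2 } := by
  have h2' : (l : ℝ) + n = p := by exact_mod_cast h2
  have h3' : (l : ℝ) * m + m * n - l * n = k * q := by exact_mod_cast h3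
  have h4' : 2 * (l : ℝ) * m * n - l * m - m * n = k * q * (p - k - 1) := by exact_mod_cast h4
  have hp' : (0 : ℝ) < p := by exact_mod_cast hp
  have hconst : (0 : ℝ) ≤ k * q * (p - k - 1) := by
    have : (0 : ℤ) ≤ k * q * (p - k - 1) := mul_nonneg (by positivity) (by omega)
    exact_mod_cast this
  have hsqrt : √(((p : ℝ) + 2 * k * q) ^ 2 + 8 * k * p * q * ((p : ℝ) - k - 1)) =
      4 * p * m - (p + 2 * k * q) := by
    have := sqrt_discrim_eq_of_pos_root (by positivity) (by linarith) (by exact_mod_cast hm)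
      (mixedExt_quadratic_eq_zero h2' h3' h4')
    rw [discrim] at this
    convert this using 2 <;> ring
  refine ⟨by rw [hsqrt]; field_simp; ring, ?_⟩
  rw [hsqrt]
  exact Set.pair_eq_half_add_sub_sqrt h2'
    (by linear_combination (l + n + p) * h2' - 4 * mixedExt_mul_eq h2' h3')

/-- Solution of the system arising from a mixed extension of `P₃` of type
`(l, −m, n)` cospectral with `K_{p,k}^q`. -/
theorem mixed_ext_P3_pos_neg_pos (p k q a l m n : ℤ)
    (hp : 0 < p) (hk : 0 < k) (hq : 0 < q) (hpk : k + 2 ≤ p)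
    (ha : 0 ≤ a) (hm : 1 ≤ m) (hl : 1 ≤ l) (hn : 2 ≤ n)
    (h1 : m + a = q) (h2 : l + n = p)
    (h3 : l * m + m * n - l * n = k * q)
    (h4 : 2 * l * m * n - l * m - m * n = k * q * (p - k - 1)) :
    (m : ℝ) =
      ((p : ℝ) + 2 * k * q +
          Real.sqrt (((p : ℝ) + 2 * k * q) ^ 2 + 8 * k * p * q * ((p : ℝ) - k - 1)))
        / (4 * p) ∧
    ({(l : ℝ), (n : ℝ)} : Set ℝ) =
      { ((p : ℝ) + Real.sqrt ((p : ℝ) ^ 2 - p + 2 * k * q -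
            Real.sqrt (((p : ℝ) + 2 * k * q) ^ 2 + 8 * k * p * q * ((p : ℝ) - k - 1)))) / 2,
        ((p : ℝ) - Real.sqrt ((p : ℝ) ^ 2 - p + 2 * k * q -
            Real.sqrt (((p : ℝ) + 2 * k * q) ^ 2 + 8 * k * p * q * ((p : ℝ) - k - 1)))) / 2 } :=
  mixed_ext_P3_pos_neg_pos_general p k q l m n hp hk hq hpk hm h2 h3 h4
end

section
/- Let p, k, q, m, n be positive integers and a ≥ 0 an integer satisfying a = q − 3, m + n = p − 1, m + n = kq, and 4mn = kq(p − k − 1). Then kq = p − 1, q is a perfect square q = b² with b ≥ 2 an integer, and {m, n} = { k(q ± √q)/2 }. -/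
/-- Parameter condition for a mixed extension of `P₄` of type `(−2,m,n,−2)`
plus isolated vertices to be cospectral with `K_{p,k}^q`. -/
theorem mixed_ext_P4_b (p k q m n a : ℤ)
    (hp : 0 < p) (hk : 0 < k) (hq : 0 < q) (hm : 0 < m) (hn : 0 < n) (ha : 0 ≤ a)
    (h1 : a = q - 3) (h2 : m + n = p - 1) (h3 : m + n = k * q)
    (h4 : 4 * m * n = k * q * (p - k - 1)) :
    k * q = p - 1 ∧
    (∃ b : ℤ, 2 ≤ b ∧ q = b ^ 2) ∧
    ({(m : ℝ), (n : ℝ)} : Set ℝ) =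
      { (k : ℝ) * ((q : ℝ) + Real.sqrt q) / 2,
        (k : ℝ) * ((q : ℝ) - Real.sqrt q) / 2 } := by
  have hkq : k * q = p - 1 := h3 ▸ h2
  have hq3 : 3 ≤ q := by linarith
  have hd : (m - n) ^ 2 = k ^ 2 * q := by nlinarith [hkq, h4, h3]
  have hdvd2 : k ^ 2 ∣ (m - n) ^ 2 := ⟨q, hd⟩
  have hdvd : k ∣ (m - n) := (Int.pow_dvd_pow_iff (by norm_num)).mp hdvd2
  obtain ⟨c, hc⟩ := hdvd
  have hc2 : c ^ 2 = q := by
    have hk2 : k ^ 2 ≠ 0 := pow_ne_zero _ hk.ne'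
    have : k ^ 2 * c ^ 2 = k ^ 2 * q := by rw [← hd, hc]; ring
    exact mul_left_cancel₀ hk2 this
  have hb2 : q = |c| ^ 2 := by rw [sq_abs, hc2]
  have hbnn : (0:ℤ) ≤ |c| := abs_nonneg c
  have hbge : 2 ≤ |c| := by nlinarith
  have hsq : Real.sqrt q = ((|c| : ℤ) : ℝ) := by
    have : (q : ℝ) = ((|c| : ℤ) : ℝ) ^ 2 := by exact_mod_cast hb2
    rw [this, Real.sqrt_sq (by exact_mod_cast hbnn)]
  refine ⟨hkq, ⟨|c|, hbge, hb2⟩, ?_⟩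
  rw [hsq]
  rcases abs_cases c with ⟨hcb, _⟩ | ⟨hcb, _⟩
  · have e1 : 2 * m = k * (q + |c|) := by rw [hcb]; linarith [hc, h3]
    have e2 : 2 * n = k * (q - |c|) := by rw [hcb]; linarith [hc, h3]
    have e1' : (m : ℝ) = (k : ℝ) * ((q : ℝ) + ((|c| : ℤ) : ℝ)) / 2 := by
      have := (congrArg (Int.cast : ℤ → ℝ) e1); push_cast [Int.cast_abs] at this ⊢; linarith
    have e2' : (n : ℝ) = (k : ℝ) * ((q : ℝ) - ((|c| : ℤ) : ℝ)) / 2 := by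
      have := (congrArg (Int.cast : ℤ → ℝ) e2); push_cast [Int.cast_abs] at this ⊢; linarith
    rw [e1', e2']
  · have e1 : 2 * n = k * (q + |c|) := by rw [hcb]; linarith [hc, h3]
    have e2 : 2 * m = k * (q - |c|) := by rw [hcb]; linarith [hc, h3]
    have e1' : (n : ℝ) = (k : ℝ) * ((q : ℝ) + ((|c| : ℤ) : ℝ)) / 2 := by
      have := (congrArg (Int.cast : ℤ → ℝ) e1); push_cast [Int.cast_abs] at this ⊢; linarith
    have e2' : (m : ℝ) = (k : ℝ) * ((q : ℝ) - ((|c| : ℤ) : ℝ)) / 2 := by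
      have := (congrArg (Int.cast : ℤ → ℝ) e2); push_cast [Int.cast_abs] at this ⊢; linarith
    rw [e1', e2', Set.pair_comm]
end

section
/- The only solutions in positive integers n, k, q and nonnegative integer a of the system a + n = q − 1, p = 10, 6n − 9 = p + kq − 1, 34n + 18 = kq(p − k − 1) with 1 ≤ k ≤ 8 are (a, n, p, k, q) = (26, 18, 10, 2, 45) and (56, 63, 10, 3, 120). -/
/-- The only solutions of the system characterizing when a mixed extension of
`P₄` of type `(3,4,−n,4)` plus `a` isolated vertices is cospectral with
`K_{p,k}^q` are `(a,n,p,k,q) = (26,18,10,2,45)` and `(56,63,10,3,120)`. -/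
theorem solutions_P4_3_4_n_4 (a n p k q : ℤ)
    (ha : 0 ≤ a) (hn : 1 ≤ n) (hk : 1 ≤ k) (hq : 1 ≤ q) (hk8 : k ≤ 8) :
    (a + n = q - 1 ∧ p = 10 ∧
     6 * n - 9 = p + k * q - 1 ∧
     34 * n + 18 = k * q * (p - k - 1))
    ↔ ((a, n, p, k, q) = (26, 18, 10, 2, 45) ∨
       (a, n, p, k, q) = (56, 63, 10, 3, 120)) := by
  constructor
  · rintro ⟨h1, rfl, h3, h4⟩
    interval_cases k <;>
      (simp only [Prod.mk.injEq, and_true, true_and]; ring_nf at h3 h4; omega)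
  · rintro (h | h) <;> simp_all <;> ring
end

section
/- Let p, k, q be positive integers with p − 2 ≥ k, and let l, m, n ≥ 1 and a ≥ 0 be integers satisfying a + m = q − 1, l + n = p − 1, lm + mn − ln = kq, and 2lmn + ln = kq(p − k − 1). Let s = √((2kq − p + 1)² + 8kq(p−1)(p−k)). Then m = (2kq − p + 1 + s)/(4(p−1)), a = (4pq − 2(k+2)q − 3(p−1) − s)/(4(p−1)), and {l, n} = { (p − 1 ± √((p−1)² + 2kq + p − 1 − s))/2 }. -/
/-- Solution of the system arising from a mixed extension of `P₅` of type
`(1, l, −m, n, 1)` plus isolated vertices being cospectral with `K_{p,k}^q`. -/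
theorem mixed_ext_P5 (p k q a l m n : ℤ)
    (hp : 0 < p) (hk : 0 < k) (hq : 0 < q) (hpk : k + 2 ≤ p)
    (ha : 0 ≤ a) (hl : 1 ≤ l) (hm : 1 ≤ m) (hn : 1 ≤ n)
    (h1 : a + m = q - 1) (h2 : l + n = p - 1)
    (h3 : l * m + m * n - l * n = k * q)
    (h4 : 2 * l * m * n + l * n = k * q * (p - k - 1)) :
    let s : ℝ := Real.sqrt ((2 * (k : ℝ) * q - p + 1) ^ 2 +
      8 * k * q * ((p : ℝ) - 1) * ((p : ℝ) - k))
    (m : ℝ) = (2 * (k : ℝ) * q - p + 1 + s) / (4 * ((p : ℝ) - 1)) ∧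
    (a : ℝ) = (4 * (p : ℝ) * q - 2 * ((k : ℝ) + 2) * q - 3 * ((p : ℝ) - 1) - s) /
        (4 * ((p : ℝ) - 1)) ∧
    ({(l : ℝ), (n : ℝ)} : Set ℝ) =
      { ((p : ℝ) - 1 + Real.sqrt (((p : ℝ) - 1) ^ 2 + 2 * k * q + p - 1 - s)) / 2,
        ((p : ℝ) - 1 - Real.sqrt (((p : ℝ) - 1) ^ 2 + 2 * k * q + p - 1 - s)) / 2 } := by
  intro s
  have hp3 : (3:ℤ) ≤ p := by linarith
  have hquad : 2*(p-1)*m^2 + (p-1-2*k*q)*m = k*q*(p-k) := by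
    linear_combination (2*m+1)*h3 + h4 - (2*m^2+m)*h2
  have hkq : 0 < k*q*(p-k) := by
    have : (0:ℤ) < p - k := by linarith
    exact mul_pos (mul_pos hk hq) this
  have hS0 : (0:ℤ) ≤ 4*(p-1)*m + p - 1 - 2*k*q := by nlinarith
  -- quadratic over ℝ
  have hquadR : 2*((p:ℝ)-1)*(m:ℝ)^2 + ((p:ℝ)-1-2*k*q)*(m:ℝ) = (k:ℝ)*q*((p:ℝ)-k) := by
    exact_mod_cast congrArg (fun z : ℤ => (z:ℝ)) hquad
  have hs : s = ((4*(p-1)*m + p - 1 - 2*k*q : ℤ) : ℝ) := by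
    have harg : (2 * (k : ℝ) * q - p + 1) ^ 2 +
        8 * k * q * ((p : ℝ) - 1) * ((p : ℝ) - k)
        = ((4*(p-1)*m + p - 1 - 2*k*q : ℤ) : ℝ)^2 := by
      push_cast
      linear_combination (-8*((p:ℝ)-1)) * hquadR
    rw [show s = Real.sqrt ((2 * (k : ℝ) * q - p + 1) ^ 2 +
      8 * k * q * ((p : ℝ) - 1) * ((p : ℝ) - k)) from rfl, harg,
      Real.sqrt_sq (by exact_mod_cast hS0)]
  have hpne : (4*((p:ℝ)-1)) ≠ 0 := by
    have : (3:ℝ) ≤ (p:ℝ) := by exact_mod_cast hp3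
    nlinarith
  refine ⟨?_, ?_, ?_⟩
  · rw [hs, eq_div_iff hpne]; push_cast; ring
  · have h1R : (a:ℝ) + m = (q:ℝ) - 1 := by exact_mod_cast h1
    rw [hs, eq_div_iff hpne]; push_cast
    linear_combination (4*((p:ℝ)-1)) * h1R
  · have hln : l*n = m*(p-1) - k*q := by linear_combination m*h2 - h3
    have hlnR : (l:ℝ)*n = (m:ℝ)*((p:ℝ)-1) - (k:ℝ)*q := by exact_mod_cast hln
    have h2R : (l:ℝ) + n = (p:ℝ) - 1 := by exact_mod_cast h2
    have hD : ((p:ℝ)-1)^2 + 2*k*q + p - 1 - s = ((l:ℝ) - n)^2 := by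
      rw [hs]; push_cast
      linear_combination 4*hlnR - ((l:ℝ) + n + (p:ℝ) - 1) * h2R
    rw [hD]
    rcases le_total n l with h | h
    · have hnl : (0:ℝ) ≤ (l:ℝ) - n := by
        have : (n:ℝ) ≤ l := by exact_mod_cast h
        linarith
      rw [Real.sqrt_sq hnl]
      have e1 : ((p:ℝ) - 1 + ((l:ℝ) - n)) / 2 = l := by linarith
      have e2 : ((p:ℝ) - 1 - ((l:ℝ) - n)) / 2 = n := by linarith
      rw [e1, e2]
    · have hnl : (0:ℝ) ≤ (n:ℝ) - l := by
        have : (l:ℝ) ≤ n := by exact_mod_cast h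
        linarith
      rw [show ((l:ℝ) - n)^2 = ((n:ℝ) - l)^2 by ring, Real.sqrt_sq hnl]
      have e1 : ((p:ℝ) - 1 + ((n:ℝ) - l)) / 2 = n := by linarith
      have e2 : ((p:ℝ) - 1 - ((n:ℝ) - l)) / 2 = l := by linarith
      rw [e1, e2, Set.pair_comm]
end
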